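/- Let q₁, q₂, q₃, q₄ be positive integers with (q₁q₂, q₃q₄) = (q₁, q₂) = (q₃, q₄) = 1, and define λ*(a, b, l, m, n) = ∑_{1 ≤ x,y,z ≤ ab, x²+y²+z+1 ≡ 0 (mod a), x²+y²+z+2 ≡ 0 (mod b)} e((lx+my+nz)/(ab)). Then λ*(q₁q₂, q₃q₄, l, m, n) = λ*(q₁, q₃, l·u, m·u, n·u) · λ*(q₂, q₄, l·v, m·v, n·v), where u is the inverse of q₂q₄ modulo q₁q₃ and v is the inverse of q₁q₃ modulo q₂q₄. -/

import Mathlib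

open Finset

noncomputable def e (t : ℝ) : ℂ := Complex.exp (2 * Real.pi * Complex.I * t)

/-- λ*(a, b, l, m, n): exponential sum over triples (x,y,z) mod ab with
x²+y²+z+1 ≡ 0 (mod a) and x²+y²+z+2 ≡ 0 (mod b). -/
noncomputable def lamStar (a b : ℕ) (l m n : ℤ) : ℂ :=
  ∑ x ∈ Finset.Icc 1 (a * b), ∑ y ∈ Finset.Icc 1 (a * b), ∑ z ∈ Finset.Icc 1 (a * b),
    if a ∣ (x ^ 2 + y ^ 2 + z + 1) ∧ b ∣ (x ^ 2 + y ^ 2 + z + 2) then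
      e (((l * (x : ℤ) + m * (y : ℤ) + n * (z : ℤ) : ℤ) : ℝ) / ((a * b : ℕ) : ℝ))
    else 0

/-! By the Chinese remainder theorem a residue triple modulo `q₁q₂q₃q₄` is the same as a pair of
triples modulo `q₁q₃` and `q₂q₄`. As `(q₁, q₂) = (q₃, q₄) = 1`, the conditions modulo `q₁q₂` and
`q₃q₄` split into conditions modulo `q₁, q₃` and modulo `q₂, q₄`; and as
`q₂q₄u + q₁q₃v ≡ 1 (mod q₁q₂q₃q₄)`, the character splits as
`e(k / q₁q₂q₃q₄) = e(uk / q₁q₃) e(vk / q₂q₄)`. So the summand factors, and with it the sum. -/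

lemma e_add (s t : ℝ) : e (s + t) = e s * e t := by
  simp only [e, Complex.ofReal_add, mul_add, Complex.exp_add]

lemma e_intCast_div_eq_stdAddChar (N : ℕ) [NeZero N] (k : ℤ) :
    e ((k : ℝ) / N) = ZMod.stdAddChar (k : ZMod N) := by
  rw [ZMod.stdAddChar_coe, e]
  push_cast
  ring_nf

lemma e_intCast_div_congr {N : ℕ} [NeZero N] {k k' : ℤ} (h : k ≡ k' [ZMOD N]) :
    e ((k : ℝ) / N) = e ((k' : ℝ) / N) := by
  rw [e_intCast_div_eq_stdAddChar, e_intCast_div_eq_stdAddChar,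
    (ZMod.intCast_eq_intCast_iff _ _ _).2 h]

lemma e_intCast_div_mul {A B : ℕ} [NeZero A] [NeZero B] (hAB : A.Coprime B) {u v : ℤ}
    (hu : B * u ≡ 1 [ZMOD A]) (hv : A * v ≡ 1 [ZMOD B]) (k : ℤ) :
    e ((k : ℝ) / (A * B : ℕ)) = e (((u * k : ℤ) : ℝ) / A) * e (((v * k : ℤ) : ℝ) / B) := by
  have hA : (A : ℝ) ≠ 0 := NeZero.ne _
  have hB : (B : ℝ) ≠ 0 := NeZero.ne _
  have hinv : B * u + A * v ≡ 1 [ZMOD (A * B : ℕ)] := by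
    rw [Nat.cast_mul, ← Int.modEq_and_modEq_iff_modEq_mul (by simpa using hAB)]
    constructor
    · simpa using hu.add (Int.modEq_zero_iff_dvd.2 (dvd_mul_right (A : ℤ) v))
    · simpa [add_comm] using hv.add (Int.modEq_zero_iff_dvd.2 (dvd_mul_right (B : ℤ) u))
  rw [← e_add, e_intCast_div_congr (by simpa using (hinv.mul_left k).symm)]
  congr 1
  push_cast
  field_simp

lemma coprime_mul_mul_of_coprime {a₁ a₂ b₁ b₂ : ℕ} (h : (a₁ * a₂).Coprime (b₁ * b₂))
    (ha : a₁.Coprime a₂) (hb : b₁.Coprime b₂) : (a₁ * b₁).Coprime (a₂ * b₂) := by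
  simp only [Nat.coprime_mul_iff_left, Nat.coprime_mul_iff_right] at *
  exact ⟨⟨ha, h.1.2.symm⟩, h.2.1, hb⟩

section ResidueSums

variable {M : Type*} [AddCommMonoid M]

lemma sum_Icc_natCast_eq_sum_zmod {N : ℕ} [NeZero N] (F : ZMod N → M) :
    ∑ x ∈ Icc 1 N, F x = ∑ w, F w := by
  refine sum_nbij' (↑) (fun w => (w - 1).val + 1) (by simp) (fun w _ => ?_) (fun x hx => ?_)
    (fun w _ => by simp) fun _ _ => rfl
  · simpa using ZMod.val_lt (w - 1)
  · obtain ⟨y, rfl⟩ : ∃ y, x = y + 1 := ⟨x - 1, by grind⟩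
    have hy : y < N := by grind
    simp [ZMod.val_natCast, Nat.mod_eq_of_lt hy]

lemma sum_Icc_mul_diag_eq_sum_sum {A B : ℕ} [NeZero A] [NeZero B] (h : A.Coprime B)
    (Φ : ℕ → ℕ → M)
    (hΦ : ∀ {a a' b b'}, a ≡ a' [MOD A] → b ≡ b' [MOD B] → Φ a b = Φ a' b') :
    ∑ x ∈ Icc 1 (A * B), Φ x x = ∑ a ∈ Icc 1 A, ∑ b ∈ Icc 1 B, Φ a b := by
  let Ψ : ZMod A × ZMod B → M := fun p => Φ p.1.val p.2.val
  have hΨ (a b : ℕ) : Ψ (a, b) = Φ a b := by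
    refine hΦ ?_ ?_ <;> simp only [ZMod.val_natCast] <;> exact Nat.mod_modEq _ _
  calc ∑ x ∈ Icc 1 (A * B), Φ x x
      = ∑ x ∈ Icc 1 (A * B), Ψ (ZMod.chineseRemainder h x) :=
        sum_congr rfl fun x _ => by rw [← hΨ, map_natCast]; rfl
    _ = ∑ p, Ψ p :=
        (sum_Icc_natCast_eq_sum_zmod (Ψ ∘ ZMod.chineseRemainder h)).trans
          ((ZMod.chineseRemainder h).toEquiv.sum_comp Ψ)
    _ = ∑ a ∈ Icc 1 A, ∑ b ∈ Icc 1 B, Φ a b := by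
        rw [Fintype.sum_prod_type, ← sum_Icc_natCast_eq_sum_zmod]
        refine sum_congr rfl fun a _ => ?_
        rw [← sum_Icc_natCast_eq_sum_zmod]
        exact sum_congr rfl fun b _ => hΨ a b

lemma sum_Icc3_mul_eq_mul {R : Type*} [CommSemiring R] {A B : ℕ} [NeZero A] [NeZero B]
    (h : A.Coprime B) (f g : ℕ → ℕ → ℕ → R)
    (hf : ∀ {x x' y y' z z'}, x ≡ x' [MOD A] → y ≡ y' [MOD A] → z ≡ z' [MOD A] →
      f x y z = f x' y' z')
    (hg : ∀ {x x' y y' z z'}, x ≡ x' [MOD B] → y ≡ y' [MOD B] → z ≡ z' [MOD B] →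
      g x y z = g x' y' z') :
    ∑ x ∈ Icc 1 (A * B), ∑ y ∈ Icc 1 (A * B), ∑ z ∈ Icc 1 (A * B), f x y z * g x y z =
      (∑ x ∈ Icc 1 A, ∑ y ∈ Icc 1 A, ∑ z ∈ Icc 1 A, f x y z) *
        ∑ x ∈ Icc 1 B, ∑ y ∈ Icc 1 B, ∑ z ∈ Icc 1 B, g x y z := by
  simp only [sum_mul_sum]
  rw [sum_Icc_mul_diag_eq_sum_sum h (fun x₁ x₂ => ∑ y ∈ _, ∑ z ∈ _, f x₁ y z * g x₂ y z)
    fun hx hx' => sum_congr rfl fun y _ => sum_congr rfl fun z _ => by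
      rw [hf hx .rfl .rfl, hg hx' .rfl .rfl]]
  refine sum_congr rfl fun x₁ _ => sum_congr rfl fun x₂ _ => ?_
  rw [sum_Icc_mul_diag_eq_sum_sum h (fun y₁ y₂ => ∑ z ∈ _, f x₁ y₁ z * g x₂ y₂ z)
    fun hy hy' => sum_congr rfl fun z _ => by rw [hf .rfl hy .rfl, hg .rfl hy' .rfl]]
  refine sum_congr rfl fun y₁ _ => sum_congr rfl fun y₂ _ => ?_
  exact sum_Icc_mul_diag_eq_sum_sum h (fun z₁ z₂ => f x₁ y₁ z₁ * g x₂ y₂ z₂) fun hz hz' => by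
    rw [hf .rfl .rfl hz, hg .rfl .rfl hz']

end ResidueSums

noncomputable def lamTerm (a b : ℕ) (l m n : ℤ) (x y z : ℕ) : ℂ :=
  if a ∣ (x ^ 2 + y ^ 2 + z + 1) ∧ b ∣ (x ^ 2 + y ^ 2 + z + 2) then
    e (((l * (x : ℤ) + m * (y : ℤ) + n * (z : ℤ) : ℤ) : ℝ) / ((a * b : ℕ) : ℝ))
  else 0

lemma lamStar_eq_sum_lamTerm (a b : ℕ) (l m n : ℤ) :
    lamStar a b l m n = ∑ x ∈ Icc 1 (a * b), ∑ y ∈ Icc 1 (a * b), ∑ z ∈ Icc 1 (a * b),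
      lamTerm a b l m n x y z :=
  rfl

lemma lamTerm_congr {a b : ℕ} [NeZero (a * b)] (l m n : ℤ) {x x' y y' z z' : ℕ}
    (hx : x ≡ x' [MOD a * b]) (hy : y ≡ y' [MOD a * b]) (hz : z ≡ z' [MOD a * b]) :
    lamTerm a b l m n x y z = lamTerm a b l m n x' y' z' := by
  have hdvd {d : ℕ} (c : ℕ) (hd : d ∣ a * b) :
      d ∣ x ^ 2 + y ^ 2 + z + c ↔ d ∣ x' ^ 2 + y' ^ 2 + z' + c := by
    have : x ^ 2 + y ^ 2 + z + c ≡ x' ^ 2 + y' ^ 2 + z' + c [MOD d] := by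
      gcongr <;> exact Nat.ModEq.of_dvd hd ‹_›
    rw [Nat.dvd_iff_mod_eq_zero, Nat.dvd_iff_mod_eq_zero, this]
  have harg : l * x + m * y + n * z ≡ l * x' + m * y' + n * z' [ZMOD (a * b : ℕ)] := by
    rw [← Int.natCast_modEq_iff] at hx hy hz
    gcongr
  unfold lamTerm
  simp only [hdvd 1 (dvd_mul_right a b), hdvd 2 (dvd_mul_left b a), e_intCast_div_congr harg]

lemma lamTerm_mul {q₁ q₂ q₃ q₄ : ℕ} [NeZero (q₁ * q₃)] [NeZero (q₂ * q₄)]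
    (hco₁ : (q₁ * q₂).Coprime (q₃ * q₄)) (hco₂ : q₁.Coprime q₂) (hco₃ : q₃.Coprime q₄)
    {u v : ℤ} (hu : ((q₂ * q₄ : ℕ) : ℤ) * u ≡ 1 [ZMOD ((q₁ * q₃ : ℕ) : ℤ)])
    (hv : ((q₁ * q₃ : ℕ) : ℤ) * v ≡ 1 [ZMOD ((q₂ * q₄ : ℕ) : ℤ)]) (l m n : ℤ) (x y z : ℕ) :
    lamTerm (q₁ * q₂) (q₃ * q₄) l m n x y z =
      lamTerm q₁ q₃ (l * u) (m * u) (n * u) x y z *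
        lamTerm q₂ q₄ (l * v) (m * v) (n * v) x y z := by
  have hsplit {a b c : ℕ} (h : a.Coprime b) : a * b ∣ c ↔ a ∣ c ∧ b ∣ c := by
    rw [← h.lcm_eq_mul, Nat.lcm_dvd_iff]
  have he := e_intCast_div_mul (coprime_mul_mul_of_coprime hco₁ hco₂ hco₃) hu hv
    (l * x + m * y + n * z)
  rw [show q₁ * q₃ * (q₂ * q₄) = q₁ * q₂ * (q₃ * q₄) by ring] at he
  unfold lamTerm
  rw [ite_zero_mul_ite_zero, he]
  refine if_congr (by simp only [hsplit hco₂, hsplit hco₃]; tauto) ?_ rfl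
  congr 4 <;> ring

theorem lamStar_multiplicative_general (q₁ q₂ q₃ q₄ : ℕ)
    (hco₁ : Nat.Coprime (q₁ * q₂) (q₃ * q₄)) (hco₂ : Nat.Coprime q₁ q₂)
    (hco₃ : Nat.Coprime q₃ q₄) (l m n : ℤ) (u v : ℤ)
    (hu : ((q₂ * q₄ : ℕ) : ℤ) * u ≡ 1 [ZMOD ((q₁ * q₃ : ℕ) : ℤ)])
    (hv : ((q₁ * q₃ : ℕ) : ℤ) * v ≡ 1 [ZMOD ((q₂ * q₄ : ℕ) : ℤ)]) :
    lamStar (q₁ * q₂) (q₃ * q₄) l m n =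
      lamStar q₁ q₃ (l * u) (m * u) (n * u) * lamStar q₂ q₄ (l * v) (m * v) (n * v) := by
  by_cases hq : q₁ = 0 ∨ q₂ = 0 ∨ q₃ = 0 ∨ q₄ = 0
  · -- a zero modulus empties the summation range `Icc 1 0` on both sides
    rcases hq with rfl | rfl | rfl | rfl <;> simp [lamStar]
  obtain ⟨h₁, h₂, h₃, h₄⟩ : q₁ ≠ 0 ∧ q₂ ≠ 0 ∧ q₃ ≠ 0 ∧ q₄ ≠ 0 := by tauto
  have : NeZero q₁ := ⟨h₁⟩
  have : NeZero q₂ := ⟨h₂⟩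
  have : NeZero q₃ := ⟨h₃⟩
  have : NeZero q₄ := ⟨h₄⟩
  simp only [lamStar_eq_sum_lamTerm, lamTerm_mul hco₁ hco₂ hco₃ hu hv,
    show q₁ * q₂ * (q₃ * q₄) = q₁ * q₃ * (q₂ * q₄) by ring]
  exact sum_Icc3_mul_eq_mul (coprime_mul_mul_of_coprime hco₁ hco₂ hco₃) _ _
    (lamTerm_congr _ _ _) (lamTerm_congr _ _ _)

theorem lamStar_multiplicative (q₁ q₂ q₃ q₄ : ℕ) (h₁ : 0 < q₁) (h₂ : 0 < q₂) (h₃ : 0 < q₃)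
    (h₄ : 0 < q₄) (hco₁ : Nat.Coprime (q₁ * q₂) (q₃ * q₄)) (hco₂ : Nat.Coprime q₁ q₂)
    (hco₃ : Nat.Coprime q₃ q₄) (l m n : ℤ) (u v : ℤ)
    (hu : ((q₂ * q₄ : ℕ) : ℤ) * u ≡ 1 [ZMOD ((q₁ * q₃ : ℕ) : ℤ)])
    (hv : ((q₁ * q₃ : ℕ) : ℤ) * v ≡ 1 [ZMOD ((q₂ * q₄ : ℕ) : ℤ)]) :
    lamStar (q₁ * q₂) (q₃ * q₄) l m n =
      lamStar q₁ q₃ (l * u) (m * u) (n * u) * lamStar q₂ q₄ (l * v) (m * v) (n * v) :=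
  lamStar_multiplicative_general q₁ q₂ q₃ q₄ hco₁ hco₂ hco₃ l m n u v hu hv
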